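/- Transfer lemma for the upper coefficient inequality: suppose 2 ≤ q < ∞ and β ≥ 1 are such that ‖g‖_{H^q} ≤ (Σ |aₙ|² c_β(n))^{1/2} holds for all g(z) = Σ aₙ zⁿ with finite right-hand side. Then for every positive integer k, ‖f‖_{H^{kq}} ≤ (Σ |aₙ|² c_{kβ}(n))^{1/2} for all f with finite right-hand side. -/

import Mathlib

/-! Write `f ^ k = ∑ bₙ zⁿ`, where `b` is the `k`-fold Cauchy power of `a` (the coefficients of
`(mk a) ^ k` in the power series ring), and apply the hypothesis to `f ^ k`, whose `H^q` mean is
the `k`-th power of the `H^{kq}` mean of `f`. Cauchy–Schwarz with the weights `c_β`, together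
with the Vandermonde identity `c_β^{*k} = c_{kβ}`, gives `|bₙ|² ≤ c_{kβ}(n) (|a|²/c_β)^{*k}(n)`.
For exponents `≥ 1` the coefficients are submultiplicative, `c(i + j) ≤ c(i) c(j)`, so
`c_β(n) |bₙ|² ≤ (|a|² c_{kβ})^{*k}(n)`; summing over `n` bounds `∑ |bₙ|² c_β(n)` by
`(∑ |aₙ|² c_{kβ}(n))^k`, and taking `k`-th roots concludes. -/

noncomputable section

open Real

/-- The `n`-th Taylor coefficient of `(1-z)^{-β}`. -/
def binCoeff (β : ℝ) (n : ℕ) : ℝ := Real.Gamma (n + β) / (Real.Gamma β * n.factorial)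

/-- The `p`-th power mean of `f` on the circle of radius `r`. -/
def hardyMean (p : ℝ) (f : ℂ → ℂ) (r : ℝ) : ℝ :=
  ((2 * π)⁻¹ *
      ∫ θ in (0 : ℝ)..(2 * π),
        ‖f ((r : ℂ) * Complex.exp ((θ : ℂ) * Complex.I))‖ ^ p) ^ (1 / p)

open Finset PowerSeries

theorem Ring.multichoose_add {R : Type*} [CommRing R] [BinomialRing R] (r s : R) (n : ℕ) :
    multichoose (r + s) n = ∑ ij ∈ antidiagonal n, multichoose r ij.1 * multichoose s ij.2 := by
  have multichoose_eq_negOnePow_smul_choose_neg :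
      ∀ (t : R) m, multichoose t m = Int.negOnePow m • choose (-t) m := by
    intro t m
    rw [choose_neg', smul_smul, ← Int.negOnePow_add, Int.negOnePow_even _ (by simp), one_smul]
  simp_rw [multichoose_eq_negOnePow_smul_choose_neg, neg_add,
    add_choose_eq n (Commute.all (-r) (-s)), smul_sum]
  refine sum_congr rfl fun ij hij => ?_
  rw [← mem_antidiagonal.mp hij, Nat.cast_add, Int.negOnePow_add, smul_mul_smul_comm, mul_smul]

theorem Real.Gamma_nat_add_eq_mul_ascPochhammer {β : ℝ} (hβ : 0 < β) (n : ℕ) :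
    Gamma (n + β) = Gamma β * (ascPochhammer ℝ n).eval β := by
  induction n with
  | zero => simp
  | succ n ih =>
    rw [ascPochhammer_succ_eval, Nat.cast_succ, add_right_comm, Gamma_add_one (by positivity), ih]
    ring

section BinCoeff

variable {β : ℝ}

theorem binCoeff_eq_ascPochhammer_div (hβ : 0 < β) (n : ℕ) :
    binCoeff β n = (ascPochhammer ℝ n).eval β / n.factorial := by
  rw [binCoeff, Gamma_nat_add_eq_mul_ascPochhammer hβ,
    mul_div_mul_left _ _ (Gamma_pos_of_pos hβ).ne']

theorem binCoeff_eq_multichoose (hβ : 0 < β) (n : ℕ) : binCoeff β n = Ring.multichoose β n := by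
  rw [binCoeff_eq_ascPochhammer_div hβ, ← Polynomial.ascPochhammer_smeval_eq_eval,
    ← Ring.factorial_nsmul_multichoose_eq_ascPochhammer, nsmul_eq_mul,
    mul_div_cancel_left₀ _ (by positivity)]

theorem binCoeff_zero (hβ : 0 < β) : binCoeff β 0 = 1 := by
  simp [binCoeff_eq_ascPochhammer_div hβ]

theorem binCoeff_succ (hβ : 0 < β) (n : ℕ) :
    binCoeff β (n + 1) = binCoeff β n * ((β + n) / (n + 1)) := by
  rw [binCoeff_eq_ascPochhammer_div hβ, binCoeff_eq_ascPochhammer_div hβ,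
    ascPochhammer_succ_eval, Nat.factorial_succ]
  push_cast
  field_simp

theorem binCoeff_pos (hβ : 0 < β) (n : ℕ) : 0 < binCoeff β n := by
  rw [binCoeff_eq_ascPochhammer_div hβ]
  exact div_pos (ascPochhammer_pos n β hβ) (by positivity)

theorem one_le_binCoeff (hβ : 1 ≤ β) (n : ℕ) : 1 ≤ binCoeff β n := by
  have hβ₀ : 0 < β := by linarith
  induction n with
  | zero => rw [binCoeff_zero hβ₀]
  | succ n ih =>
    rw [binCoeff_succ hβ₀]
    exact one_le_mul_of_one_le_of_one_le ih ((one_le_div (by positivity)).2 (by linarith))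

theorem binCoeff_add_le_mul (hβ : 1 ≤ β) (i j : ℕ) :
    binCoeff β (i + j) ≤ binCoeff β i * binCoeff β j := by
  have hβ₀ : 0 < β := by linarith
  induction j with
  | zero => rw [add_zero, binCoeff_zero hβ₀, mul_one]
  | succ j ih =>
    rw [← add_assoc, binCoeff_succ hβ₀, binCoeff_succ hβ₀, ← mul_assoc]
    refine mul_le_mul ih ?_ (by positivity) (mul_pos (binCoeff_pos hβ₀ i) (binCoeff_pos hβ₀ j)).le
    -- `x ↦ (β + x) / (x + 1)` is antitone for `β ≥ 1`
    rw [div_le_div_iff₀ (by positivity) (by positivity)]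
    push_cast
    nlinarith [(i.cast_nonneg : (0 : ℝ) ≤ i), (j.cast_nonneg : (0 : ℝ) ≤ j)]

theorem mk_binCoeff_mul_mk_binCoeff {α : ℝ} (hα : 0 < α) (hβ : 0 < β) :
    mk (binCoeff α) * mk (binCoeff β) = mk (binCoeff (α + β)) := by
  ext n
  simp only [coeff_mul, coeff_mk, binCoeff_eq_multichoose hα, binCoeff_eq_multichoose hβ,
    binCoeff_eq_multichoose (add_pos hα hβ), Ring.multichoose_add]

theorem mk_binCoeff_pow (hβ : 0 < β) {k : ℕ} (hk : 1 ≤ k) :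
    mk (binCoeff β) ^ k = mk (binCoeff (k * β)) := by
  induction k, hk using Nat.le_induction with
  | base => simp
  | succ k hk ih =>
    rw [pow_succ, ih, mk_binCoeff_mul_mk_binCoeff (by positivity) hβ]
    push_cast
    ring_nf

end BinCoeff

namespace PowerSeries

section NonnegCoeff

variable {P Q : ℝ⟦X⟧}

theorem coeff_mul_nonneg (hP : ∀ m, 0 ≤ coeff m P) (hQ : ∀ m, 0 ≤ coeff m Q) (n : ℕ) :
    0 ≤ coeff n (P * Q) := by
  rw [coeff_mul]
  exact sum_nonneg fun ij _ => mul_nonneg (hP _) (hQ _)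

theorem coeff_pow_nonneg (hP : ∀ m, 0 ≤ coeff m P) (k n : ℕ) : 0 ≤ coeff n (P ^ k) := by
  induction k generalizing n with
  | zero => rw [pow_zero, coeff_one]; split_ifs <;> norm_num
  | succ k ih => rw [pow_succ]; exact coeff_mul_nonneg ih hP n

end NonnegCoeff

section CauchySchwarz

variable {R : Type*} [SeminormedRing R] {A B : R⟦X⟧} {P Q U V : ℝ⟦X⟧}

theorem sq_norm_coeff_mul_le (hP : ∀ m, 0 ≤ coeff m P) (hQ : ∀ m, 0 ≤ coeff m Q)
    (hU : ∀ m, 0 ≤ coeff m U) (hV : ∀ m, 0 ≤ coeff m V)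
    (hA : ∀ m, ‖coeff m A‖ ^ 2 ≤ coeff m P * coeff m U)
    (hB : ∀ m, ‖coeff m B‖ ^ 2 ≤ coeff m Q * coeff m V) (n : ℕ) :
    ‖coeff n (A * B)‖ ^ 2 ≤ coeff n (P * Q) * coeff n (U * V) := by
  simp only [coeff_mul]
  calc ‖∑ ij ∈ antidiagonal n, coeff ij.1 A * coeff ij.2 B‖ ^ 2
      ≤ (∑ ij ∈ antidiagonal n, ‖coeff ij.1 A‖ * ‖coeff ij.2 B‖) ^ 2 := by
        gcongr
        exact (norm_sum_le _ _).trans (sum_le_sum fun ij _ => norm_mul_le _ _)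
    _ ≤ _ := by
        refine sum_sq_le_sum_mul_sum_of_sq_le_mul _ (fun ij _ => mul_nonneg (hP _) (hQ _))
          (fun ij _ => mul_nonneg (hU _) (hV _)) fun ij _ => ?_
        calc (‖coeff ij.1 A‖ * ‖coeff ij.2 B‖) ^ 2
            = ‖coeff ij.1 A‖ ^ 2 * ‖coeff ij.2 B‖ ^ 2 := mul_pow _ _ _
          _ ≤ (coeff ij.1 P * coeff ij.1 U) * (coeff ij.2 Q * coeff ij.2 V) :=
            mul_le_mul (hA _) (hB _) (sq_nonneg _) (mul_nonneg (hP _) (hU _))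
          _ = _ := by ring

theorem sq_norm_coeff_pow_le [NormOneClass R] (hP : ∀ m, 0 ≤ coeff m P)
    (hU : ∀ m, 0 ≤ coeff m U) (hA : ∀ m, ‖coeff m A‖ ^ 2 ≤ coeff m P * coeff m U) (k n : ℕ) :
    ‖coeff n (A ^ k)‖ ^ 2 ≤ coeff n (P ^ k) * coeff n (U ^ k) := by
  induction k generalizing n with
  | zero => simp only [pow_zero, coeff_one]; split_ifs <;> simp
  | succ k ih =>
    simp only [pow_succ]
    exact sq_norm_coeff_mul_le (coeff_pow_nonneg hP k) hP (coeff_pow_nonneg hU k) hU ih hA n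

end CauchySchwarz

section Submultiplicative

variable {f : ℕ → ℝ} {U V W Z : ℝ⟦X⟧}

theorem mul_coeff_mul_le (hf : ∀ m, 0 ≤ f m) (hf_mul : ∀ i j, f (i + j) ≤ f i * f j)
    (hU : ∀ m, 0 ≤ coeff m U) (hV : ∀ m, 0 ≤ coeff m V)
    (hUW : ∀ m, f m * coeff m U ≤ coeff m W) (hVZ : ∀ m, f m * coeff m V ≤ coeff m Z) (n : ℕ) :
    f n * coeff n (U * V) ≤ coeff n (W * Z) := by
  simp only [coeff_mul, mul_sum]
  refine sum_le_sum fun ij hij => ?_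
  rw [← mem_antidiagonal.mp hij]
  calc f (ij.1 + ij.2) * (coeff ij.1 U * coeff ij.2 V)
      ≤ (f ij.1 * f ij.2) * (coeff ij.1 U * coeff ij.2 V) :=
        mul_le_mul_of_nonneg_right (hf_mul _ _) (mul_nonneg (hU _) (hV _))
    _ = (f ij.1 * coeff ij.1 U) * (f ij.2 * coeff ij.2 V) := by ring
    _ ≤ coeff ij.1 W * coeff ij.2 Z :=
        mul_le_mul (hUW _) (hVZ _) (mul_nonneg (hf _) (hV _))
          ((mul_nonneg (hf _) (hU _)).trans (hUW _))

theorem mul_coeff_pow_le (hf : ∀ m, 0 ≤ f m) (hf_zero : f 0 ≤ 1)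
    (hf_mul : ∀ i j, f (i + j) ≤ f i * f j) (hU : ∀ m, 0 ≤ coeff m U)
    (hUW : ∀ m, f m * coeff m U ≤ coeff m W) (k n : ℕ) :
    f n * coeff n (U ^ k) ≤ coeff n (W ^ k) := by
  induction k generalizing n with
  | zero =>
    simp only [pow_zero, coeff_one]
    split_ifs with hn
    · rwa [hn, mul_one]
    · rw [mul_zero]
  | succ k ih =>
    simp only [pow_succ]
    exact mul_coeff_mul_le hf hf_mul (coeff_pow_nonneg hU k) hU ih hUW n

end Submultiplicative

section Summation

variable {R : Type*} [NormedRing R] {A : R⟦X⟧}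

theorem summable_norm_coeff_pow (hA : Summable fun n => ‖coeff n A‖) (k : ℕ) :
    Summable fun n => ‖coeff n (A ^ k)‖ := by
  induction k with
  | zero =>
    apply summable_of_ne_finset_zero (s := {0})
    intro n hn
    rw [pow_zero, coeff_one, if_neg (notMem_singleton.mp hn), norm_zero]
  | succ k ih =>
    simp only [pow_succ, coeff_mul]
    exact summable_norm_sum_mul_antidiagonal_of_summable_norm (f := fun n => coeff n (A ^ k))
      (g := fun n => coeff n A) ih hA

theorem tsum_coeff_pow [CompleteSpace R] (hA : Summable fun n => ‖coeff n A‖) (k : ℕ) :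
    ∑' n, coeff n (A ^ k) = (∑' n, coeff n A) ^ k := by
  induction k with
  | zero => simp only [pow_zero, coeff_one, tsum_ite_eq]
  | succ k ih =>
    simp only [pow_succ, coeff_mul, ← ih]
    exact (tsum_mul_tsum_eq_tsum_sum_antidiagonal_of_summable_norm
      (summable_norm_coeff_pow hA k) hA).symm

end Summation

end PowerSeries

theorem summable_norm_mul_pow_of_summable_sq {R : Type*} [NormedDivisionRing R] {a : ℕ → R}
    (ha : Summable fun n => ‖a n‖ ^ 2) {z : R} (hz : ‖z‖ < 1) :
    Summable fun n => ‖a n * z ^ n‖ := by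
  have hgeom : Summable fun n => (‖z‖ ^ 2) ^ n :=
    summable_geometric_of_lt_one (by positivity) (by nlinarith [norm_nonneg z])
  refine (((ha.add hgeom).div_const 2)).of_nonneg_of_le (fun n => norm_nonneg _) fun n => ?_
  rw [norm_mul, norm_pow, ← pow_mul, mul_comm 2 n, pow_mul]
  nlinarith [two_mul_le_add_sq ‖a n‖ (‖z‖ ^ n)]

theorem tsum_mul_pow_pow_eq_tsum_coeff {R : Type*} [NormedCommRing R] [CompleteSpace R]
    {a : ℕ → R} {z : R} (ha : Summable fun n => ‖a n * z ^ n‖) (k : ℕ) :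
    (∑' n, a n * z ^ n) ^ k = ∑' n, coeff n (mk a ^ k) * z ^ n := by
  have coeff_rescale' : ∀ (A : R⟦X⟧) n, coeff n (rescale z A) = coeff n A * z ^ n :=
    fun A n => by rw [coeff_rescale, mul_comm]
  have hA : Summable fun n => ‖coeff n (rescale z (mk a))‖ := by
    simpa only [coeff_rescale', coeff_mk]
  simpa only [← map_pow, coeff_rescale', coeff_mk] using (tsum_coeff_pow hA k).symm

theorem hardyMean_pow (p : ℝ) (f : ℂ → ℂ) (r : ℝ) {k : ℕ} (hk : k ≠ 0) :
    hardyMean p (fun z => f z ^ k) r = hardyMean (k * p) f r ^ k := by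
  have hpow : ∀ w, ‖f w ^ k‖ ^ p = ‖f w‖ ^ ((k : ℝ) * p) := fun w => by
    rw [norm_pow, ← rpow_natCast, ← rpow_mul (norm_nonneg _)]
  have hmean : 0 ≤ (2 * π)⁻¹ * ∫ θ in (0 : ℝ)..(2 * π),
      ‖f ((r : ℂ) * Complex.exp ((θ : ℂ) * Complex.I))‖ ^ ((k : ℝ) * p) :=
    mul_nonneg (by positivity)
      (intervalIntegral.integral_nonneg (by positivity) fun θ _ => by positivity)
  simp only [hardyMean, hpow]
  rw [← rpow_natCast, ← rpow_mul hmean]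
  congr 1
  field_simp

theorem sq_norm_coeff_pow_mul_binCoeff_le {R : Type*} [SeminormedRing R] [NormOneClass R]
    {β : ℝ} (hβ : 1 ≤ β) (a : ℕ → R) {k : ℕ} (hk : 1 ≤ k) (n : ℕ) :
    ‖coeff n (mk a ^ k)‖ ^ 2 * binCoeff β n ≤
      coeff n (mk (fun m => ‖a m‖ ^ 2 * binCoeff (k * β) m) ^ k) := by
  have hβ₀ : 0 < β := by linarith
  have hkβ : 1 ≤ k * β := one_le_mul_of_one_le_of_one_le (by exact_mod_cast hk) hβ
  have hc : ∀ m, 0 < binCoeff β m := binCoeff_pos hβ₀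
  have hc' : ∀ m, 0 < binCoeff (k * β) m := binCoeff_pos (by linarith)
  set u : ℕ → ℝ := fun m => ‖a m‖ ^ 2 / binCoeff β m
  have hu : ∀ m, 0 ≤ coeff m (mk u) := fun m => by
    rw [coeff_mk]; exact div_nonneg (sq_nonneg _) (hc m).le
  have cauchy_schwarz : ‖coeff n (mk a ^ k)‖ ^ 2 ≤ binCoeff (k * β) n * coeff n (mk u ^ k) := by
    simpa only [mk_binCoeff_pow hβ₀ hk, coeff_mk] using
      sq_norm_coeff_pow_le (A := mk a) (P := mk (binCoeff β)) (U := mk u)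
        (fun m => by rw [coeff_mk]; exact (hc m).le) hu
        (fun m => by simp only [coeff_mk, u, mul_div_cancel₀ _ (hc m).ne', le_refl]) k n
  have hf_mul : ∀ i j, binCoeff β (i + j) * binCoeff (k * β) (i + j) ≤
      binCoeff β i * binCoeff (k * β) i * (binCoeff β j * binCoeff (k * β) j) := fun i j =>
    (mul_le_mul (binCoeff_add_le_mul hβ i j) (binCoeff_add_le_mul hkβ i j) (hc' _).le
      (mul_pos (hc i) (hc j)).le).trans_eq (by ring)
  have submultiplicative : binCoeff β n * binCoeff (k * β) n * coeff n (mk u ^ k) ≤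
      coeff n (mk (fun m => ‖a m‖ ^ 2 * binCoeff (k * β) m) ^ k) :=
    mul_coeff_pow_le (f := fun m => binCoeff β m * binCoeff (k * β) m)
      (fun m => (mul_pos (hc m) (hc' m)).le)
      (by rw [binCoeff_zero hβ₀, binCoeff_zero (by linarith), mul_one]) hf_mul hu
      (fun m => le_of_eq (by
        rw [coeff_mk, coeff_mk, mul_right_comm, mul_div_cancel₀ _ (hc m).ne'])) k n
  calc ‖coeff n (mk a ^ k)‖ ^ 2 * binCoeff β n
      ≤ binCoeff (k * β) n * coeff n (mk u ^ k) * binCoeff β n :=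
        mul_le_mul_of_nonneg_right cauchy_schwarz (hc n).le
    _ = binCoeff β n * binCoeff (k * β) n * coeff n (mk u ^ k) := by ring
    _ ≤ _ := submultiplicative

section CoefficientSum

variable {R : Type*} [NormedRing R] [NormOneClass R] {β : ℝ} {a : ℕ → R} {k : ℕ}

theorem summable_sq_norm_coeff_pow_mul_binCoeff (hβ : 1 ≤ β) (hk : 1 ≤ k)
    (ha : Summable fun n => ‖a n‖ ^ 2 * binCoeff (k * β) n) :
    Summable fun n => ‖coeff n (mk a ^ k)‖ ^ 2 * binCoeff β n := by
  have hw : Summable fun m => ‖coeff m (mk fun n => ‖a n‖ ^ 2 * binCoeff (k * β) n)‖ := by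
    simpa only [coeff_mk, Real.norm_eq_abs] using ha.abs
  exact (summable_norm_coeff_pow hw k).of_norm.of_nonneg_of_le
    (fun n => mul_nonneg (sq_nonneg _) (binCoeff_pos (by linarith) n).le)
    (sq_norm_coeff_pow_mul_binCoeff_le hβ a hk)

theorem tsum_sq_norm_coeff_pow_mul_binCoeff_le (hβ : 1 ≤ β) (hk : 1 ≤ k)
    (ha : Summable fun n => ‖a n‖ ^ 2 * binCoeff (k * β) n) :
    ∑' n, ‖coeff n (mk a ^ k)‖ ^ 2 * binCoeff β n ≤
      (∑' n, ‖a n‖ ^ 2 * binCoeff (k * β) n) ^ k := by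
  have hw : Summable fun m => ‖coeff m (mk fun n => ‖a n‖ ^ 2 * binCoeff (k * β) n)‖ := by
    simpa only [coeff_mk, Real.norm_eq_abs] using ha.abs
  calc _ ≤ ∑' n, coeff n ((mk fun n => ‖a n‖ ^ 2 * binCoeff (k * β) n) ^ k) :=
        (summable_sq_norm_coeff_pow_mul_binCoeff hβ hk ha).tsum_le_tsum
          (sq_norm_coeff_pow_mul_binCoeff_le hβ a hk) (summable_norm_coeff_pow hw k).of_norm
    _ = _ := by simp only [tsum_coeff_pow hw, coeff_mk]

end CoefficientSum

theorem transfer_upper_general (q β : ℝ) (hβ : 1 ≤ β)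
    (hyp : ∀ (a : ℕ → ℂ) (g : ℂ → ℂ),
      (∀ z : ℂ, ‖z‖ < 1 → g z = ∑' n, a n * z ^ n) →
      (Summable fun n => ‖a n‖ ^ 2 * binCoeff β n) →
      ∀ r : ℝ, 0 < r → r < 1 →
        hardyMean q g r ≤ (∑' n, ‖a n‖ ^ 2 * binCoeff β n) ^ ((1 : ℝ) / 2))
    (k : ℕ) (hk : 1 ≤ k) :
    ∀ (a : ℕ → ℂ) (f : ℂ → ℂ),
      (∀ z : ℂ, ‖z‖ < 1 → f z = ∑' n, a n * z ^ n) →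
      (Summable fun n => ‖a n‖ ^ 2 * binCoeff ((k : ℝ) * β) n) →
      ∀ r : ℝ, 0 < r → r < 1 →
        hardyMean ((k : ℝ) * q) f r ≤
          (∑' n, ‖a n‖ ^ 2 * binCoeff ((k : ℝ) * β) n) ^ ((1 : ℝ) / 2) := by
  intro a f hf ha r hr₀ hr₁
  have hk₀ : k ≠ 0 := by omega
  have hkβ : 1 ≤ (k : ℝ) * β := one_le_mul_of_one_le_of_one_le (by exact_mod_cast hk) hβ
  have ha_sq : Summable fun n => ‖a n‖ ^ 2 := ha.of_nonneg_of_le (fun n => sq_nonneg _)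
    fun n => le_mul_of_one_le_right (sq_nonneg _) (one_le_binCoeff hkβ n)
  have hfk : ∀ z : ℂ, ‖z‖ < 1 → f z ^ k = ∑' n, coeff n (mk a ^ k) * z ^ n := fun z hz => by
    rw [hf z hz, tsum_mul_pow_pow_eq_tsum_coeff (summable_norm_mul_pow_of_summable_sq ha_sq hz)]
  have hmean := hyp _ (fun z => f z ^ k) hfk
    (summable_sq_norm_coeff_pow_mul_binCoeff hβ hk ha) r hr₀ hr₁
  rw [hardyMean_pow q f r hk₀] at hmean
  have hS : 0 ≤ ∑' n, ‖a n‖ ^ 2 * binCoeff (k * β) n :=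
    tsum_nonneg fun n => mul_nonneg (sq_nonneg _) (binCoeff_pos (by linarith) n).le
  refine le_of_pow_le_pow_left₀ hk₀ (rpow_nonneg hS _) (hmean.trans ?_)
  calc _ ≤ ((∑' n, ‖a n‖ ^ 2 * binCoeff (k * β) n) ^ k) ^ ((1 : ℝ) / 2) :=
        rpow_le_rpow (tsum_nonneg fun n => mul_nonneg (sq_nonneg _)
          (binCoeff_pos (by linarith) n).le) (tsum_sq_norm_coeff_pow_mul_binCoeff_le hβ hk ha)
          (by norm_num)
    _ = _ := by rw [← rpow_natCast, ← rpow_natCast, ← rpow_mul hS, ← rpow_mul hS,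
      mul_comm _ ((1 : ℝ) / 2)]

/-- Transfer lemma: if `‖g‖_{H^q} ≤ (Σ |aₙ|² c_β(n))^{1/2}` holds for all `g` with finite
right-hand side, then `‖f‖_{H^{kq}} ≤ (Σ |aₙ|² c_{kβ}(n))^{1/2}` for every positive
integer `k` (the Hardy norm bound being expressed radius by radius). -/
theorem transfer_upper (q β : ℝ) (hq : 2 ≤ q) (hβ : 1 ≤ β)
    (hyp : ∀ (a : ℕ → ℂ) (g : ℂ → ℂ),
      (∀ z : ℂ, ‖z‖ < 1 → g z = ∑' n, a n * z ^ n) →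
      (Summable fun n => ‖a n‖ ^ 2 * binCoeff β n) →
      ∀ r : ℝ, 0 < r → r < 1 →
        hardyMean q g r ≤ (∑' n, ‖a n‖ ^ 2 * binCoeff β n) ^ ((1 : ℝ) / 2))
    (k : ℕ) (hk : 1 ≤ k) :
    ∀ (a : ℕ → ℂ) (f : ℂ → ℂ),
      (∀ z : ℂ, ‖z‖ < 1 → f z = ∑' n, a n * z ^ n) →
      (Summable fun n => ‖a n‖ ^ 2 * binCoeff ((k : ℝ) * β) n) →
      ∀ r : ℝ, 0 < r → r < 1 →
        hardyMean ((k : ℝ) * q) f r ≤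
          (∑' n, ‖a n‖ ^ 2 * binCoeff ((k : ℝ) * β) n) ^ ((1 : ℝ) / 2) :=
  transfer_upper_general q β hβ hyp k hk
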